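/- Let G and H be groups, let n ≥ 1, and let α : G → H be a surjective group homomorphism whose kernel is contained in the center of G (i.e., the extension 1 → ker α → G → H → 1 is central). Then the diagonal subgroup Δ_n(G) is normal in G^n_H, and the map G^n_H/Δ_n(G) → (ker α)^{n-1} induced by (g_1, …, g_n) ↦ (g_1 g_n^{-1}, …, g_{n-1} g_n^{-1}) is a well-defined group isomorphism. -/

import Mathlib

/-- The `n`-fold fibre product `G^n_H` of a homomorphism `α : G →* H`,
as a subgroup of `Gⁿ`. -/
def fiberProd {G H : Type*} [Group G] [Group H] (α : G →* H) (n : ℕ) :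
    Subgroup (Fin n → G) where
  carrier := {g | ∀ i j, α (g i) = α (g j)}
  one_mem' := fun _ _ => rfl
  mul_mem' := by
    intro a b ha hb i j
    simp only [Pi.mul_apply, map_mul, ha i j, hb i j]
  inv_mem' := by
    intro a ha i j
    simp only [Pi.inv_apply, map_inv, ha i j]

/-- The diagonal homomorphism `Δ_n : G →* Gⁿ`. -/
def diagHom (G : Type*) [Group G] (n : ℕ) : G →* (Fin n → G) where
  toFun g := fun _ => g
  map_one' := rfl
  map_mul' _ _ := rfl

/-!
Because `ker α` is central, two elements with the same image under `α` induce the same inner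
automorphism of `G`. Hence conjugating a diagonal tuple by a tuple of `G^n_H` gives a diagonal
tuple, and the map `g ↦ (g_i g_n⁻¹)_{i<n}` is a homomorphism: `(ab)_i (ab)_n⁻¹ = a_i (b_i b_n⁻¹) a_n⁻¹`,
and the central factor `b_i b_n⁻¹` can be moved out. Its kernel consists of the constant tuples, and
`(k_1, …, k_{n-1}, 1)` is a preimage of `k`; the isomorphism is the first isomorphism theorem.
-/

section CentralKernel

variable {G H : Type*} [Group G] [Group H] {α : G →* H}

theorem mul_inv_mem_ker_of_map_eq {a b : G} (h : α a = α b) : a * b⁻¹ ∈ α.ker := by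
  rw [MonoidHom.mem_ker, map_mul, map_inv, h, mul_inv_cancel]

theorem conj_eq_conj_of_map_eq (hc : α.ker ≤ Subgroup.center G) {a b : G} (h : α a = α b)
    (c : G) : a * c * a⁻¹ = b * c * b⁻¹ := by
  have hcomm := Subgroup.mem_center_iff.mp (hc (mul_inv_mem_ker_of_map_eq h)) (b * c * b⁻¹)
  calc a * c * a⁻¹
      = (a * b⁻¹) * (b * c * b⁻¹) * (a * b⁻¹)⁻¹ := by group
    _ = (b * c * b⁻¹) * (a * b⁻¹) * (a * b⁻¹)⁻¹ := by rw [← hcomm]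
    _ = b * c * b⁻¹ := by group

theorem conj_mem_range_diagHom (hc : α.ker ≤ Subgroup.center G) {n : ℕ} (i₀ : Fin n)
    {g : Fin n → G} (hg : g ∈ fiberProd α n) {x : Fin n → G} (hx : x ∈ (diagHom G n).range) :
    g * x * g⁻¹ ∈ (diagHom G n).range := by
  obtain ⟨c, rfl⟩ := hx
  exact ⟨g i₀ * c * (g i₀)⁻¹, funext fun i => conj_eq_conj_of_map_eq hc (hg i₀ i) c⟩

theorem mul_mul_mul_inv_of_mem_center {a a' b b' : G} (h : b * b'⁻¹ ∈ Subgroup.center G) :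
    a * b * (a' * b')⁻¹ = a * a'⁻¹ * (b * b'⁻¹) := by
  calc a * b * (a' * b')⁻¹ = a * ((b * b'⁻¹) * a'⁻¹) := by group
    _ = a * (a'⁻¹ * (b * b'⁻¹)) := by rw [Subgroup.mem_center_iff.mp h]
    _ = a * a'⁻¹ * (b * b'⁻¹) := by group

theorem mem_fiberProd_of_forall_mem_ker {n : ℕ} {g : Fin n → G} (hg : ∀ i, g i ∈ α.ker) :
    g ∈ fiberProd α n := fun i j => by rw [hg i, hg j]

end CentralKernel

section LastCoordinate

variable {n : ℕ} (hn : 1 ≤ n)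

abbrev Fin.lastOfOneLE : Fin n := ⟨n - 1, Nat.sub_lt hn Nat.one_pos⟩

theorem Fin.eq_castLE_or_eq_lastOfOneLE (j : Fin n) :
    (∃ i : Fin (n - 1), Fin.castLE (Nat.sub_le n 1) i = j) ∨ j = Fin.lastOfOneLE hn := by
  by_cases hj : (j : ℕ) < n - 1
  · exact .inl ⟨⟨j, hj⟩, rfl⟩
  · exact .inr (Fin.ext (by simp; omega))

end LastCoordinate

section DifferenceMap

variable {G H : Type*} [Group G] [Group H] {n : ℕ}

def fiberProdDiff (α : G →* H) (hn : 1 ≤ n) (hc : α.ker ≤ Subgroup.center G) :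
    fiberProd α n →* (Fin (n - 1) → α.ker) where
  toFun x i := ⟨x.1 (Fin.castLE (Nat.sub_le n 1) i) * (x.1 (Fin.lastOfOneLE hn))⁻¹,
    mul_inv_mem_ker_of_map_eq (x.2 _ _)⟩
  map_one' := by
    ext
    simp
  map_mul' x y := by
    ext i
    exact mul_mul_mul_inv_of_mem_center
      (hc (mul_inv_mem_ker_of_map_eq (y.2 (Fin.castLE (Nat.sub_le n 1) i) (Fin.lastOfOneLE hn))))

variable (α : G →* H) (hn : 1 ≤ n) (hc : α.ker ≤ Subgroup.center G)

theorem fiberProdDiff_apply (x : fiberProd α n) (i : Fin (n - 1)) :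
    (fiberProdDiff α hn hc x i : G)
      = x.1 (Fin.castLE (Nat.sub_le n 1) i) * (x.1 (Fin.lastOfOneLE hn))⁻¹ :=
  rfl

theorem ker_fiberProdDiff :
    (fiberProdDiff α hn hc).ker = ((diagHom G n).range).subgroupOf (fiberProd α n) := by
  ext x
  simp only [MonoidHom.mem_ker, Subgroup.mem_subgroupOf, MonoidHom.mem_range, funext_iff,
    Subtype.ext_iff, fiberProdDiff_apply, Pi.one_apply, OneMemClass.coe_one, mul_inv_eq_one]
  constructor
  · intro h
    refine ⟨x.1 (Fin.lastOfOneLE hn), fun j => ?_⟩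
    rcases Fin.eq_castLE_or_eq_lastOfOneLE hn j with ⟨i, rfl⟩ | rfl
    exacts [(h i).symm, rfl]
  · rintro ⟨c, hx⟩ i
    rw [← hx, ← hx]
    rfl

theorem fiberProdDiff_surjective : Function.Surjective (fiberProdDiff α hn hc) := by
  intro k
  let g : Fin n → G := fun j => if hj : (j : ℕ) < n - 1 then k ⟨j, hj⟩ else 1
  have hg : ∀ j, g j ∈ α.ker := fun j => by
    by_cases hj : (j : ℕ) < n - 1
    · simp only [g, dif_pos hj, SetLike.coe_mem]
    · simp only [g, dif_neg hj, one_mem]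
  refine ⟨⟨g, mem_fiberProd_of_forall_mem_ker hg⟩, funext fun i => Subtype.ext ?_⟩
  simp [fiberProdDiff_apply, g]

end DifferenceMap

/-- Let `α : G → H` be a surjective group homomorphism with central
kernel, and `n ≥ 1`. Then the diagonal subgroup `Δ_n(G)` is normal in the fibre product
`G^n_H`, and the map `G^n_H / Δ_n(G) → (ker α)^{n-1}` induced by
`(g_1, …, g_n) ↦ (g_1 g_n⁻¹, …, g_{n-1} g_n⁻¹)` is a well-defined group isomorphism. -/
theorem stmt_7 {G H : Type*} [Group G] [Group H] (n : ℕ) (hn : 1 ≤ n)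
    (α : G →* H)
    (hc : α.ker ≤ Subgroup.center G) :
    (∀ g ∈ fiberProd α n, ∀ x ∈ (diagHom G n).range, g * x * g⁻¹ ∈ (diagHom G n).range) ∧
    ∀ [inst : (((diagHom G n).range).subgroupOf (fiberProd α n)).Normal],
      ∃ e : (fiberProd α n) ⧸ (((diagHom G n).range).subgroupOf (fiberProd α n)) ≃*
          (Fin (n - 1) → α.ker),
        ∀ x : fiberProd α n, ∀ i : Fin (n - 1),
          ((e (QuotientGroup.mk x)) i : G)
            = x.1 (Fin.castLE (by omega) i) * (x.1 ⟨n - 1, by omega⟩)⁻¹ := by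
  refine ⟨fun g hg x hx => conj_mem_range_diagHom hc ⟨0, hn⟩ hg hx, fun {_} => ?_⟩
  exact ⟨(QuotientGroup.quotientMulEquivOfEq (ker_fiberProdDiff α hn hc).symm).trans
    (QuotientGroup.quotientKerEquivOfSurjective _ (fiberProdDiff_surjective α hn hc)),
    fun x i => fiberProdDiff_apply α hn hc x i⟩
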